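/- arXiv:1904.05627 — 2 statements merged into one kernel-verified Lean document; each statement's English description precedes it below -/
import Mathlib

section
/- Let T be a rooted tree in which every non-leaf vertex has children and all leaves are at the same depth D, and let f : V(T) → {0,1} satisfy the 2-partial condition restricted to T: every internal (non-leaf, non-root) vertex v with parent p has, among its children and p, at least 2 vertices u with f(u) ≠ f(v), and the root has at least 2 children u with f(u) ≠ f(root). Then for every even 2t ≤ D, some vertex at depth 2t has color f(root). -/
open Fin.NatCast

/-- Property 1 of the paper. A finite rooted tree is modeled by a `parent` map and a
`depth` function: `parent root = root`, and `depth v = depth (parent v) + 1` for every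
non-root `v`. The children of `v` are the non-root vertices `u` with `parent u = v`;
a vertex is internal if it has a child, and all leaves are at the same depth `D`.
If `f : V → Fin 2` satisfies the 2-partial condition on the tree (the root has at least
two children of the opposite color, and every internal non-root vertex has at least two
neighbors — parent or children — of the opposite color), then for every even depth
`2 * t ≤ D` some vertex at depth `2 * t` has the same color as the root. -/
theorem partial_coloring_tree_property
    {V : Type*} [Fintype V] [DecidableEq V]
    (root : V) (parent : V → V) (depth : V → ℕ) (D : ℕ) (f : V → Fin 2)
    (hproot : parent root = root)
    (hdroot : depth root = 0)
    (hdepth : ∀ v : V, v ≠ root → depth v = depth (parent v) + 1)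
    (hleaf : ∀ v : V, (¬ ∃ u : V, u ≠ root ∧ parent u = v) → depth v = D)
    (hrootcond : 2 ≤ (Finset.univ.filter fun u : V =>
        u ≠ root ∧ parent u = root ∧ f u ≠ f root).card)
    (hinternal : ∀ v : V, v ≠ root → (∃ u : V, u ≠ root ∧ parent u = v) →
      2 ≤ (Finset.univ.filter fun u : V =>
        ((u ≠ root ∧ parent u = v) ∨ u = parent v) ∧ f u ≠ f v).card) :
    ∀ t : ℕ, 2 * t ≤ D → ∃ v : V, depth v = 2 * t ∧ f v = f root := by
  intro t ht
  by_contra hcon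
  push_neg at hcon
  rcases Nat.eq_zero_or_pos t with rfl | htpos
  · exact hcon root (by simpa using hdroot) rfl
  have fin2 : ∀ x y : Fin 2, x ≠ y → x = y + 1 := by decide
  set a := f root with ha
  set b := a + 1 with hb
  -- downward induction: all vertices at depth 2t - j have color b + j
  have key : ∀ j : ℕ, j ≤ 2 * t - 1 → ∀ v : V, depth v = 2 * t - j →
      f v = b + (j : Fin 2) := by
    intro j
    induction j with
    | zero =>
      intro _ v hv
      simpa using fin2 _ _ (hcon v (by simpa using hv))
    | succ j ih =>
      intro hj v hv
      have hj' : j ≤ 2 * t - 1 := Nat.le_of_succ_le hj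
      have hvr : v ≠ root := by
        intro h
        rw [h, hdroot] at hv
        omega
      have hvD : depth v < D := by omega
      -- v is internal
      have hchild : ∃ u : V, u ≠ root ∧ parent u = v := by
        by_contra hc
        exact absurd (hleaf v hc) (by omega)
      -- suppose f v were b + j
      by_contra hne
      have hfv : f v = b + (j : Fin 2) := by
        have hc : ((j + 1 : ℕ) : Fin 2) = (j : Fin 2) + 1 := by push_cast; ring
        rw [hc, ← add_assoc] at hne
        exact (by decide : ∀ x y : Fin 2, x ≠ y + 1 → x = y) _ _ hne
      -- all children of v have the same color f v, so the filter set ⊆ {parent v}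
      have hsub : (Finset.univ.filter fun u : V =>
          ((u ≠ root ∧ parent u = v) ∨ u = parent v) ∧ f u ≠ f v) ⊆ {parent v} := by
        intro u hu
        simp only [Finset.mem_filter, Finset.mem_singleton, Finset.mem_univ, true_and] at hu ⊢
        rcases hu.1 with ⟨hur, hupv⟩ | h
        · exfalso
          have hdu : depth u = 2 * t - j := by
            rw [hdepth u hur, hupv, hv]; omega
          exact hu.2 ((ih hj' u hdu).trans hfv.symm)
        · exact h
      have hcard := (Finset.card_le_card hsub).trans_eq (Finset.card_singleton _)
      have := hinternal v hvr hchild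
      omega
  -- apply at j = 2t - 1 : all depth-1 vertices have color a
  have hlev1 : ∀ v : V, depth v = 1 → f v = a := by
    intro v hv
    have h1 : f v = b + ((2 * t - 1 : ℕ) : Fin 2) :=
      key (2 * t - 1) le_rfl v (by omega)
    have hmod : (2 * t - 1) % 2 = 1 := by omega
    have hcast : ((2 * t - 1 : ℕ) : Fin 2) = 1 := by
      apply Fin.ext
      simp [Fin.val_natCast, hmod]
    rw [hcast, hb] at h1
    have : ∀ x : Fin 2, x + 1 + 1 = x := by decide
    rw [h1, this]
  -- contradict the root condition
  obtain ⟨u, hu⟩ := Finset.card_pos.mp (lt_of_lt_of_le (by norm_num) hrootcond)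
  simp only [Finset.mem_filter] at hu
  obtain ⟨-, hur, hupr, huf⟩ := hu
  have hdu : depth u = 1 := by rw [hdepth u hur, hupr, hdroot]
  exact huf (hlev1 u hdu)
end

section
/- If a d-regular graph G admits a k-partial c-coloring with k ≥ ((c−1)/c)·d + 1, and each graph of maximum degree x is properly colorable with x+1 colors, then G is properly colorable with at most d colors. -/
/-!
Each vertex has at most `d - k` neighbours of its own colour, so the subgraph of
monochromatic edges has maximum degree `d - k` and is properly `(d - k + 1)`-colourable.
Pairing that colouring with `f` gives a proper colouring of `G` with `c * (d - k + 1)`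
colours, and `k ≥ (c - 1) d / c + 1` is exactly what makes this at most `d`.
-/

open Finset

namespace SimpleGraph

variable {V α : Type*} (G : SimpleGraph V) (f : V → α)

def monochromatic : SimpleGraph V where
  Adj u v := G.Adj u v ∧ f u = f v
  symm := ⟨fun _ _ h => ⟨h.1.symm, h.2.symm⟩⟩
  loopless := ⟨fun v h => G.loopless.irrefl v h.1⟩

@[simp]
theorem monochromatic_adj {u v : V} : (G.monochromatic f).Adj u v ↔ G.Adj u v ∧ f u = f v :=
  Iff.rfl

instance [DecidableRel G.Adj] [DecidableEq α] : DecidableRel (G.monochromatic f).Adj :=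
  fun _ _ => instDecidableAnd

theorem colorable_mul_of_colorable_monochromatic [Fintype α] {m : ℕ}
    (h : (G.monochromatic f).Colorable m) : G.Colorable (Fintype.card α * m) := by
  obtain ⟨C⟩ := h
  let D : G.Coloring (α × Fin m) := Coloring.mk (fun v => (f v, C v)) fun huv heq =>
    C.valid ⟨huv, congrArg Prod.fst heq⟩ (congrArg Prod.snd heq)
  simpa using D.colorable

theorem degree_monochromatic_add_card_filter_ne [Fintype V] [DecidableRel G.Adj] [DecidableEq α]
    (v : V) :
    (G.monochromatic f).degree v + #{u ∈ G.neighborFinset v | f u ≠ f v} = G.degree v := by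
  have : (G.monochromatic f).neighborFinset v = {u ∈ G.neighborFinset v | ¬f u ≠ f v} := by
    ext u
    simp [eq_comm]
  rw [degree, this, add_comm, card_filter_add_card_filter_not, card_neighborFinset_eq_degree]

end SimpleGraph

theorem Nat.mul_sub_add_one_le {c d k : ℕ} (hkd : k ≤ d) (hk : (c - 1) * d + c ≤ c * k) :
    c * (d - k + 1) ≤ d := by
  obtain ⟨m, rfl⟩ := Nat.exists_eq_add_of_le hkd
  rcases c with _ | c
  · simp
  · simp only [Nat.add_sub_cancel, Nat.add_sub_cancel_left] at hk ⊢
    nlinarith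

theorem partial_coloring_gives_proper_coloring_general
    {V : Type*} [Fintype V]
    (G : SimpleGraph V) [DecidableRel G.Adj] (d c k : ℕ)
    (hreg : G.IsRegularOfDegree d)
    (hk : (c - 1) * d + c ≤ c * k)
    (f : V → Fin c)
    (hpartial : ∀ v : V, k ≤ ((G.neighborFinset v).filter fun u => f u ≠ f v).card)
    (hgreedy : ∀ (H : SimpleGraph V) (_ : DecidableRel H.Adj) (x : ℕ),
      (∀ v : V, H.degree v ≤ x) → H.Colorable (x + 1)) :
    G.Colorable d := by
  rcases isEmpty_or_nonempty V with _ | ⟨⟨v₀⟩⟩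
  · exact G.colorable_of_fintype.mono (by simp)
  have hkd : k ≤ d := ((hpartial v₀).trans (card_filter_le _ _)).trans (hreg v₀).le
  have hmono v : (G.monochromatic f).degree v ≤ d - k := by
    have := G.degree_monochromatic_add_card_filter_ne f v
    have := hpartial v
    have := hreg v
    omega
  have hcol := G.colorable_mul_of_colorable_monochromatic f (hgreedy _ inferInstance _ hmono)
  rw [Fintype.card_fin] at hcol
  exact hcol.mono (Nat.mul_sub_add_one_le hkd hk)

/-- If a `d`-regular graph `G` admits a `k`-partial `c`-coloring with
`k ≥ ((c-1)/c)·d + 1` (stated without division as `c * k ≥ (c-1) * d + c`), and every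
graph on `V` of maximum degree `x` is properly colorable with `x + 1` colors, then `G`
is properly colorable with at most `d` colors. -/
theorem partial_coloring_gives_proper_coloring
    {V : Type*} [Fintype V] [DecidableEq V]
    (G : SimpleGraph V) [DecidableRel G.Adj] (d c k : ℕ) (hc : 1 ≤ c)
    (hreg : G.IsRegularOfDegree d)
    (hk : (c - 1) * d + c ≤ c * k)
    (f : V → Fin c)
    (hpartial : ∀ v : V, k ≤ ((G.neighborFinset v).filter fun u => f u ≠ f v).card)
    (hgreedy : ∀ (H : SimpleGraph V) (_ : DecidableRel H.Adj) (x : ℕ),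
      (∀ v : V, H.degree v ≤ x) → H.Colorable (x + 1)) :
    G.Colorable d :=
  partial_coloring_gives_proper_coloring_general G d c k hreg hk f hpartial hgreedy
end
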